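/- Let p be a prime with p ≡ 7 (mod 8). Then there are no positive integers x, y, z with z even and x² + y² + z⁶ = p². -/

import Mathlib

/-!
Write `c = z³`. Then `x² + y² = (p - c) (p + c)`, and the two factors are coprime: both are odd,
and a common divisor divides `2p` while `0 < p - c < p`. Since `8 ∣ c` and `p ≡ 7 (mod 8)`, the
factor `p - c` is `≡ 3 (mod 4)`, so it is not a sum of two squares; but a factor of a sum of two
squares that is coprime to its cofactor is again a sum of two squares.
-/

theorem Nat.sq_add_sq_mod_four_ne_three (x y : ℕ) : (x ^ 2 + y ^ 2) % 4 ≠ 3 := by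
  intro h
  have hcast : ((x ^ 2 + y ^ 2 : ℕ) : ZMod 4) = 3 := by rw [← ZMod.natCast_mod, h]; rfl
  push_cast at hcast
  have hZMod : ∀ a b : ZMod 4, a ^ 2 + b ^ 2 ≠ 3 := by decide
  exact hZMod _ _ hcast

theorem Nat.eq_sq_add_sq_of_coprime_of_mul {m n : ℕ} (hmn : m.Coprime n)
    (h : ∃ x y, m * n = x ^ 2 + y ^ 2) : ∃ x y, m = x ^ 2 + y ^ 2 := by
  rw [Nat.eq_sq_add_sq_iff] at h ⊢
  intro q hq hq3
  obtain ⟨hq, hqm, hm0⟩ := Nat.mem_primeFactors.1 hq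
  have : Fact q.Prime := ⟨hq⟩
  have hqn : ¬ q ∣ n := fun hqn ↦
    hq.one_lt.ne' ((hmn.coprime_dvd_left hqm).eq_one_of_dvd hqn)
  have hn0 : n ≠ 0 := by rintro rfl; exact hqn (dvd_zero q)
  have hmul := h q (Nat.primeFactors_mono (dvd_mul_right m n) (mul_ne_zero hm0 hn0)
    (Nat.mem_primeFactors.2 ⟨hq, hqm, hm0⟩)) hq3
  rwa [padicValNat.mul hm0 hn0, padicValNat.eq_zero_of_not_dvd hqn, add_zero] at hmul

theorem Nat.Prime.coprime_sub_add {p c : ℕ} (hp : p.Prime) (hc : 0 < c) (hcp : c < p)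
    (hodd : Odd (p - c)) : (p - c).Coprime (p + c) := by
  have hp' : (p - c).Coprime p := (Nat.coprime_self_sub_left hcp.le).2
    (hp.coprime_iff_not_dvd.2 (Nat.not_dvd_of_pos_of_lt hc hcp)).symm
  have h2p : (p - c).Coprime (2 * p) := hodd.coprime_two_right.mul_right hp'
  rwa [show 2 * p = p + c + 1 * (p - c) by omega, Nat.coprime_add_mul_right_right] at h2p

theorem no_rep_k6 (p : ℕ) (hp : p.Prime) (hp7 : p % 8 = 7) :
    ¬ ∃ x y z : ℕ, 0 < x ∧ 0 < y ∧ 0 < z ∧ Even z ∧ x ^ 2 + y ^ 2 + z ^ 6 = p ^ 2 := by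
  rintro ⟨x, y, z, hx, -, hz, hze, h⟩
  have hcp : z ^ 3 < p := by
    refine lt_of_pow_lt_pow_left₀ 2 p.zero_le ?_
    nlinarith
  have h8 : 8 ∣ z ^ 3 := by simpa using pow_dvd_pow_of_dvd (even_iff_two_dvd.1 hze) 3
  have hmod : (p - z ^ 3) % 4 = 3 := by omega
  have hfactor : (p - z ^ 3) * (p + z ^ 3) = x ^ 2 + y ^ 2 := by
    zify [hcp.le] at h ⊢
    linear_combination -h
  have hcop := hp.coprime_sub_add (pow_pos hz 3) hcp (Nat.odd_iff.2 (by omega))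
  obtain ⟨u, v, huv⟩ := Nat.eq_sq_add_sq_of_coprime_of_mul hcop ⟨x, y, hfactor⟩
  exact Nat.sq_add_sq_mod_four_ne_three u v (huv ▸ hmod)
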